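/- arXiv:0809.3754 — 2 statements merged into one kernel-verified Lean document; each statement's English description precedes it below -/
import Mathlib

section
/- Let Q ⊆ ℂ be an unshielded continuum and Ψ a Riemann map for its basin of infinity as in the context. Suppose m : Q → Y is a monotone continuous surjection onto a compact metric space Y such that m(Imp(α)) is a single point for every angle α ∈ ℝ/ℤ. Then Y is locally connected, and the map Φ_m : ℝ/ℤ → Y that sends α to the unique point of m(Imp(α)) is a continuous surjection. -/
open Set Filter Topology Metric

noncomputable section


/-- The point `e^{2πiα}` on the unit circle corresponding to an angle `α ∈ ℝ/ℤ`. -/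
def circlePoint (α : AddCircle (1 : ℝ)) : ℂ := (AddCircle.toCircle α : ℂ)

/-- The basin of infinity of a compact set `Q ⊆ ℂ`: the union of the unbounded
connected components of `ℂ ∖ Q` (for `Q` a continuum there is exactly one). -/
def basin (Q : Set ℂ) : Set ℂ :=
  {z | z ∉ Q ∧ ¬ Bornology.IsBounded (connectedComponentIn Qᶜ z)}

/-- `Q` is an unshielded continuum: a compact connected nonempty subset of `ℂ`
which coincides with the boundary of its basin of infinity. -/
def Unshielded (Q : Set ℂ) : Prop :=
  IsCompact Q ∧ IsConnected Q ∧ Q = frontier (basin Q)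

/-- `Ψ` is a Riemann map for the basin of infinity of `Q`: a holomorphic bijection
from `{z : |z| > 1}` onto the basin of infinity. -/
def RiemannMap (Q : Set ℂ) (Ψ : ℂ → ℂ) : Prop :=
  DifferentiableOn ℂ Ψ {z | 1 < ‖z‖} ∧
  Set.BijOn Ψ {z | 1 < ‖z‖} (basin Q)

/-- The impression of the external angle `α`. -/
def impression (Ψ : ℂ → ℂ) (α : AddCircle (1 : ℝ)) : Set ℂ :=
  {w | ∃ z : ℕ → ℂ, (∀ n, 1 < ‖z n‖) ∧
        Tendsto z atTop (𝓝 (circlePoint α)) ∧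
        Tendsto (fun n => Ψ (z n)) atTop (𝓝 w)}

/-- The external ray of angle `α`. -/
def extRay (Ψ : ℂ → ℂ) (α : AddCircle (1 : ℝ)) : Set ℂ :=
  Ψ '' {z | ∃ r : ℝ, 1 < r ∧ z = (r : ℂ) * circlePoint α}

/-- The principal set of the external angle `α`. -/
def principalSet (Ψ : ℂ → ℂ) (α : AddCircle (1 : ℝ)) : Set ℂ :=
  closure (extRay Ψ α) \ extRay Ψ α

/-- A closed equivalence relation (its graph, within `Q × Q`, is closed) such that
every impression is contained in a single equivalence class. -/
structure IsClosedEquivRespImp (Q : Set ℂ) (Ψ : ℂ → ℂ) (r : ℂ → ℂ → Prop) : Prop where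
  equivalence : Equivalence r
  closedGraph : IsClosed {p : ℂ × ℂ | p.1 ∈ Q ∧ p.2 ∈ Q ∧ r p.1 p.2}
  resp : ∀ α : AddCircle (1 : ℝ), ∀ x ∈ impression Ψ α, ∀ y ∈ impression Ψ α, r x y

/-- The relation `≈₀`: the intersection of all closed equivalence relations on `Q`
in which every impression is contained in a single class. -/
def finestRel (Q : Set ℂ) (Ψ : ℂ → ℂ) (x y : ℂ) : Prop :=
  ∀ r : ℂ → ℂ → Prop, IsClosedEquivRespImp Q Ψ r → r x y

/-- The partition `𝒟` of `Q` whose elements are the connected components of the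
`≈₀`-classes; its elements are the fibers of the finest monotone map of `Q`
onto a locally connected continuum. -/
def finestPartition (Q : Set ℂ) (Ψ : ℂ → ℂ) : Set (Set ℂ) :=
  {D | ∃ x ∈ Q, D = connectedComponentIn {y ∈ Q | finestRel Q Ψ x y} x}

/-- A ray-compactum in `Q`: a compact subset of `Q` together with a closed set of
angles whose principal sets it contains and in the union of whose impressions
it is contained. -/
structure RayCompactum (Q : Set ℂ) (Ψ : ℂ → ℂ) where
  carrier : Set ℂ
  angles : Set (AddCircle (1 : ℝ))
  carrier_subset : carrier ⊆ Q
  isCompact_carrier : IsCompact carrier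
  isClosed_angles : IsClosed angles
  principal_subset : ∀ θ ∈ angles, principalSet Ψ θ ⊆ carrier
  subset_impressions : carrier ⊆ ⋃ θ ∈ angles, impression Ψ θ

/-- `C̃ = C ∪ ⋃_{θ ∈ Θ(C)} R_θ`. -/
def RayCompactum.tilde {Q : Set ℂ} {Ψ : ℂ → ℂ} (C : RayCompactum Q Ψ) : Set ℂ :=
  C.carrier ∪ ⋃ θ ∈ C.angles, extRay Ψ θ

/-- A ray-compactum `C` ray-separates the sets `A` and `B`. -/
def RaySeparates {Q : Set ℂ} {Ψ : ℂ → ℂ} (C : RayCompactum Q Ψ) (A B : Set ℂ) : Prop :=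
  C.carrier ∩ (A ∪ B) = ∅ ∧
  ∀ z ∈ closure (basin Q) \ C.tilde,
    ¬ ((connectedComponentIn (closure (basin Q) \ C.tilde) z ∩ A).Nonempty ∧
       (connectedComponentIn (closure (basin Q) \ C.tilde) z ∩ B).Nonempty)

/-- A ray-compactum `C` ray-separates a set `X` if it ray-separates some
pair of (distinct) points of `X`. -/
def RaySeparatesSet {Q : Set ℂ} {Ψ : ℂ → ℂ} (C : RayCompactum Q Ψ) (X : Set ℂ) : Prop :=
  ∃ x ∈ X, ∃ y ∈ X, x ≠ y ∧ RaySeparates C {x} {y}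

/-- A well-slicing family for a continuum `X ⊆ Q`. -/
structure IsWellSlicing {Q : Set ℂ} {Ψ : ℂ → ℂ}
    (𝒞 : Set (RayCompactum Q Ψ)) (X : Set ℂ) : Prop where
  nontrivial : ∃ C₁ ∈ 𝒞, ∃ C₂ ∈ 𝒞, C₁ ≠ C₂
  pairwiseDisjoint : ∀ C₁ ∈ 𝒞, ∀ C₂ ∈ 𝒞, C₁ ≠ C₂ → Disjoint C₁.carrier C₂.carrier
  separates : ∀ C ∈ 𝒞, RaySeparatesSet C X
  middle : ∀ C₁ ∈ 𝒞, ∀ C₂ ∈ 𝒞, C₁ ≠ C₂ → ∃ C₃ ∈ 𝒞, RaySeparates C₃ C₁.carrier C₂.carrier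

/-!
Every point of `Q` lies in some impression: it is a limit of `Ψ(ζₙ)` with `|ζₙ| > 1`, and either
`ζₙ` accumulates on the unit circle, or `ζₙ → ∞`, in which case `Ψ(1/z)` has a removable singularity
at `0` and the limit point is isolated in `Q`, so that `Q` is a single point. Impressions depend
upper semicontinuously on the angle (the set `{(α, w) | w ∈ Imp(α)}` is closed), hence `Φ_m` is
continuous; being also surjective from the compact circle, it is a quotient map, and quotients of
locally connected spaces are locally connected.
-/

lemma continuous_circlePoint : Continuous circlePoint :=
  continuous_subtype_val.comp AddCircle.continuous_toCircle

lemma exists_circlePoint_eq {z : ℂ} (hz : ‖z‖ = 1) : ∃ α, circlePoint α = z := by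
  obtain ⟨α, hα⟩ := (AddCircle.homeomorphCircle one_ne_zero).surjective
    ⟨z, mem_sphere_zero_iff_norm.2 hz⟩
  refine ⟨α, ?_⟩
  rw [AddCircle.homeomorphCircle_apply] at hα
  simp [circlePoint, hα]

lemma mem_impression_iff {Ψ : ℂ → ℂ} {α : AddCircle (1 : ℝ)} {w : ℂ} :
    w ∈ impression Ψ α ↔
      (circlePoint α, w) ∈ closure ((fun z => (z, Ψ z)) '' {z : ℂ | 1 < ‖z‖}) := by
  rw [mem_closure_iff_seq_limit]
  constructor
  · rintro ⟨z, hz, hzα, hΨz⟩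
    exact ⟨fun n => (z n, Ψ (z n)), fun n => mem_image_of_mem _ (hz n), hzα.prodMk_nhds hΨz⟩
  · rintro ⟨p, hp, hpα⟩
    choose z hz hzp using hp
    have hp_eq : p = fun n => (z n, Ψ (z n)) := funext fun n => (hzp n).symm
    subst hp_eq
    exact ⟨z, hz, (continuous_fst.tendsto _).comp hpα, (continuous_snd.tendsto _).comp hpα⟩

lemma isClosed_setOf_mem_impression (Ψ : ℂ → ℂ) :
    IsClosed {p : AddCircle (1 : ℝ) × ℂ | p.2 ∈ impression Ψ p.1} := by
  simp only [mem_impression_iff]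
  exact isClosed_closure.preimage
    ((continuous_circlePoint.comp continuous_fst).prodMk continuous_snd)

lemma isOpen_basin {Q : Set ℂ} (hQ : IsClosed Q) : IsOpen (basin Q) := by
  refine isOpen_iff_mem_nhds.2 fun z hz => mem_of_superset
    (hQ.isOpen_compl.connectedComponentIn.mem_nhds (mem_connectedComponentIn hz.1)) ?_
  intro y hy
  exact ⟨connectedComponentIn_subset Qᶜ z hy, connectedComponentIn_eq hy ▸ hz.2⟩

namespace Unshielded

variable {Q : Set ℂ}

lemma subset_closure_basin (hQ : Unshielded Q) : Q ⊆ closure (basin Q) := by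
  intro w hw
  rw [hQ.2.2] at hw
  exact frontier_subset_closure hw

lemma notMem_basin (hQ : Unshielded Q) {w : ℂ} (hw : w ∈ Q) : w ∉ basin Q := by
  rw [hQ.2.2, (isOpen_basin hQ.1.isClosed).frontier_eq] at hw
  exact hw.2

end Unshielded

lemma IsPreconnected.eq_singleton_of_insert_mem_nhds {X : Type*} [TopologicalSpace X]
    [T1Space X] {s B : Set X} {w : X} (hs : IsPreconnected s) (hw : w ∈ s)
    (hsB : Disjoint s B) (hwB : insert w B ∈ 𝓝 w) : s = {w} := by
  have hcover : s ⊆ interior (insert w B) ∪ {w}ᶜ := by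
    intro x _
    by_cases hxw : x = w
    · subst hxw
      exact .inl (mem_interior_iff_mem_nhds.2 hwB)
    · exact .inr hxw
  have hdisj : s ∩ (interior (insert w B) ∩ {w}ᶜ) = ∅ :=
    eq_empty_of_forall_notMem fun x ⟨hxs, hxB, hxw⟩ =>
      hsB.notMem_of_mem_left hxs ((interior_subset hxB).resolve_left hxw)
  rcases isPreconnected_iff_subset_of_disjoint.1 hs _ _ isOpen_interior isOpen_compl_singleton
    hcover hdisj with h | h
  · exact subset_antisymm (fun x hx => (interior_subset (h hx)).resolve_right
      (hsB.notMem_of_mem_left hx)) (singleton_subset_iff.2 hw)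
  · exact absurd rfl (h hw)

lemma exists_pos_forall_dist_lt_mem_of_injOn {f : ℂ → ℂ} {U V : Set ℂ} {c : ℂ} (hU : IsOpen U)
    (hf : DifferentiableOn ℂ f U) (hinj : InjOn f U) (hc : c ∈ U) (hV : V ∈ 𝓝 c) :
    ∃ ρ > 0, ∀ z ∈ U, dist (f z) (f c) < ρ → z ∈ V := by
  rcases (hf.analyticAt (hU.mem_nhds hc)).eventually_constant_or_nhds_le_map_nhds with
    hconst | hopen
  · have hpunct : ∀ᶠ z in 𝓝[≠] c, (f z = f c ∧ z ∈ U) ∧ z ≠ c :=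
      ((hconst.and (hU.eventually_mem hc)).filter_mono nhdsWithin_le_nhds).and
        self_mem_nhdsWithin
    obtain ⟨z, ⟨hfz, hzU⟩, hzc⟩ := hpunct.exists
    exact absurd (hinj hzU hc hfz) hzc
  · obtain ⟨ρ, hρ, hball⟩ := Metric.mem_nhds_iff.1
      (hopen (image_mem_map (inter_mem hV (hU.mem_nhds hc))))
    refine ⟨ρ, hρ, fun z hzU hz => ?_⟩
    obtain ⟨u, ⟨huV, huU⟩, hfu⟩ := hball (mem_ball.2 hz)
    exact hinj huU hzU hfu ▸ huV

lemma exists_differentiableOn_eq_of_forall_le_dist {g : ℂ → ℂ} {s ρ : ℝ} {a w : ℂ}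
    {x : ℕ → ℂ} (hs : 0 < s) (hρ : 0 < ρ) (hg : DifferentiableOn ℂ g (ball 0 s \ {0}))
    (hga : ∀ z ∈ ball (0 : ℂ) s \ {0}, ρ ≤ dist (g z) a) (hwa : w ≠ a)
    (hx : ∀ n, x n ≠ 0) (hx0 : Tendsto x atTop (𝓝 0)) (hgx : Tendsto (g ∘ x) atTop (𝓝 w)) :
    ∃ F : ℂ → ℂ, DifferentiableOn ℂ F (ball 0 s) ∧ F 0 = w ∧ EqOn F g (ball 0 s \ {0}) := by
  set h : ℂ → ℂ := fun z => (g z - a)⁻¹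
  have hga' : ∀ z ∈ ball (0 : ℂ) s \ {0}, g z - a ≠ 0 := fun z hz hza =>
    hρ.not_ge (by simpa [dist_eq_norm, hza] using hga z hz)
  have hh : DifferentiableOn ℂ h (ball 0 s \ {0}) := (hg.sub_const a).inv hga'
  have hh_bdd : BddAbove (norm ∘ h '' (ball 0 s \ {0})) := by
    refine ⟨ρ⁻¹, ?_⟩
    rintro - ⟨z, hz, rfl⟩
    simpa [h, dist_eq_norm] using inv_anti₀ hρ (hga z hz)
  set L := limUnder (𝓝[≠] (0 : ℂ)) h
  have hH : DifferentiableOn ℂ (Function.update h 0 L) (ball 0 s) :=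
    Complex.differentiableOn_update_limUnder_of_bddAbove (ball_mem_nhds 0 hs) hh hh_bdd
  have hx_mem : ∀ᶠ n in atTop, x n ∈ ball (0 : ℂ) s \ {0} :=
    (hx0.eventually (ball_mem_nhds 0 hs)).mono fun n hn => ⟨hn, hx n⟩
  -- The finite cluster value `w ≠ a` along `x` forces `L = (w - a)⁻¹ ≠ 0`: no pole.
  have hL : L = (w - a)⁻¹ := by
    have hHx : Tendsto (fun n => Function.update h 0 L (x n)) atTop (𝓝 L) := by
      have := (hH.differentiableAt (ball_mem_nhds 0 hs)).continuousAt.tendsto.comp hx0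
      rwa [Function.update_self] at this
    refine tendsto_nhds_unique hHx ?_
    refine ((hgx.sub_const a).inv₀ (sub_ne_zero.2 hwa)).congr fun n => ?_
    simp [h, Function.update_of_ne (hx n)]
  have hH0 : ∀ z ∈ ball (0 : ℂ) s, Function.update h 0 L z ≠ 0 := by
    intro z hz
    by_cases hz0 : z = 0
    · simp [hz0, hL, sub_ne_zero.2 hwa]
    · simpa [Function.update_of_ne hz0, h] using hga' z ⟨hz, hz0⟩
  refine ⟨fun z => a + (Function.update h 0 L z)⁻¹, (hH.inv hH0).const_add a, ?_, ?_⟩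
  · simp [hL]
  · intro z hz
    simp [Function.update_of_ne (show z ≠ 0 from hz.2), h]

lemma insert_image_mem_nhds_of_injOn_punctured {f : ℂ → ℂ} {r : ℝ} {x : ℕ → ℂ} {w : ℂ}
    (hr : 0 < r) (hf : DifferentiableOn ℂ f (ball 0 r \ {0}))
    (hinj : InjOn f (ball 0 r \ {0})) (hx : ∀ n, x n ≠ 0) (hx0 : Tendsto x atTop (𝓝 0))
    (hfx : Tendsto (f ∘ x) atTop (𝓝 w)) (hw : w ∉ f '' (ball 0 r \ {0})) :
    insert w (f '' (ball 0 r \ {0})) ∈ 𝓝 w := by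
  have hU : IsOpen (ball (0 : ℂ) r \ {0}) := isOpen_ball.sdiff isClosed_singleton
  have hr4 : 0 < r / 4 := by positivity
  set c : ℂ := ((r / 2 : ℝ) : ℂ)
  have hc0 : dist c 0 = r / 2 := by simp [c, abs_of_pos hr]
  have hc : c ∈ ball (0 : ℂ) r \ {0} :=
    ⟨by rw [mem_ball, hc0]; linarith, fun h => by simp [c, hr.ne'] at h⟩
  have hsub : ball (0 : ℂ) (r / 4) \ {0} ⊆ ball 0 r \ {0} :=
    sdiff_subset_sdiff_left (ball_subset_ball (by linarith))
  -- Injectivity keeps `f` away from `f c` near the puncture, since `c` is far from it.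
  obtain ⟨ρ, hρ, hρc⟩ :=
    exists_pos_forall_dist_lt_mem_of_injOn hU hf hinj hc (ball_mem_nhds c hr4)
  have hfar : ∀ z ∈ ball (0 : ℂ) (r / 4) \ {0}, ρ ≤ dist (f z) (f c) := by
    intro z hz
    by_contra! hlt
    have hzc : dist z c < r / 4 := hρc z (hsub hz) hlt
    have hz0 : dist z 0 < r / 4 := hz.1
    linarith [dist_triangle c z 0, dist_comm z c]
  obtain ⟨F, hF, hF0, hFf⟩ := exists_differentiableOn_eq_of_forall_le_dist hr4 hρ
    (hf.mono hsub) hfar (fun h => hw ⟨c, hc, h.symm⟩) hx hx0 hfx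
  rcases (hF.analyticAt (ball_mem_nhds 0 hr4)).eventually_constant_or_nhds_le_map_nhds with
    hconst | hopen
  · have hpunct : ∀ᶠ z in 𝓝[≠] (0 : ℂ), (F z = F 0 ∧ z ∈ ball (0 : ℂ) (r / 4)) ∧ z ≠ 0 :=
      ((hconst.and (ball_mem_nhds 0 hr4)).filter_mono nhdsWithin_le_nhds).and
        self_mem_nhdsWithin
    obtain ⟨z, ⟨hFz, hz⟩, hz0⟩ := hpunct.exists
    exact absurd ⟨z, hsub ⟨hz, hz0⟩, (hFf ⟨hz, hz0⟩).symm.trans (hFz.trans hF0)⟩ hw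
  · rw [hF0] at hopen
    refine mem_of_superset (hopen (image_mem_map (ball_mem_nhds 0 hr4))) ?_
    rintro _ ⟨z, hz, rfl⟩
    by_cases hz0 : z = 0
    · subst hz0
      exact .inl hF0
    · exact .inr ⟨z, hsub ⟨hz, hz0⟩, (hFf ⟨hz, hz0⟩).symm⟩

lemma image_inv_ball_sdiff_zero : (·⁻¹) '' (ball (0 : ℂ) 1 \ {0}) = {z : ℂ | 1 < ‖z‖} := by
  ext z
  rw [image_inv_eq_inv, Set.mem_inv]
  simp only [Set.mem_sdiff, mem_ball_zero_iff, mem_singleton_iff, inv_eq_zero, norm_inv,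
    Set.mem_ofPred_eq]
  constructor
  · rintro ⟨hz, hz0⟩
    exact (inv_lt_one₀ (norm_pos_iff.2 hz0)).1 hz
  · intro hz
    exact ⟨inv_lt_one_of_one_lt₀ hz, norm_pos_iff.1 (one_pos.trans hz)⟩

lemma RiemannMap.exists_mem_impression_of_tendsto {Q : Set ℂ} {Ψ : ℂ → ℂ}
    (hΨ : RiemannMap Q Ψ) {ζ : ℕ → ℂ} {c w : ℂ} (hζ : ∀ n, 1 < ‖ζ n‖)
    (hζc : Tendsto ζ atTop (𝓝 c)) (hΨζ : Tendsto (Ψ ∘ ζ) atTop (𝓝 w)) (hw : w ∉ basin Q) :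
    ∃ α, w ∈ impression Ψ α := by
  have hc : 1 ≤ ‖c‖ := ge_of_tendsto ((continuous_norm.tendsto c).comp hζc)
    (Eventually.of_forall fun n => (hζ n).le)
  rcases hc.eq_or_lt with hc1 | hc1
  · obtain ⟨α, hα⟩ := exists_circlePoint_eq hc1.symm
    exact ⟨α, ζ, hζ, hα ▸ hζc, hΨζ⟩
  · have hΨc : ContinuousAt Ψ c := (hΨ.1.differentiableAt
      ((isOpen_lt continuous_const continuous_norm).mem_nhds hc1)).continuousAt
    exact absurd (tendsto_nhds_unique (hΨc.tendsto.comp hζc) hΨζ ▸ hΨ.2.mapsTo hc1) hw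

namespace Unshielded

variable {Q : Set ℂ} {Ψ : ℂ → ℂ}

lemma eq_singleton_of_tendsto_atTop (hQ : Unshielded Q) (hΨ : RiemannMap Q Ψ) {ζ : ℕ → ℂ}
    {w : ℂ} (hw : w ∈ Q) (hζ : ∀ n, 1 < ‖ζ n‖) (hζ_atTop : Tendsto (fun n => ‖ζ n‖) atTop atTop)
    (hΨζ : Tendsto (Ψ ∘ ζ) atTop (𝓝 w)) : Q = {w} := by
  set g : ℂ → ℂ := fun z => Ψ z⁻¹
  have hmaps : MapsTo (·⁻¹) (ball (0 : ℂ) 1 \ {0}) {z : ℂ | 1 < ‖z‖} := fun z hz =>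
    image_inv_ball_sdiff_zero ▸ mem_image_of_mem _ hz
  have hg_image : g '' (ball 0 1 \ {0}) = basin Q := by
    rw [← hΨ.2.image_eq, ← image_inv_ball_sdiff_zero, image_image]
  have hg : DifferentiableOn ℂ g (ball 0 1 \ {0}) :=
    hΨ.1.comp (differentiableOn_inv.mono fun z hz => hz.2) hmaps
  have hg_inj : InjOn g (ball 0 1 \ {0}) := hΨ.2.injOn.comp inv_injective.injOn hmaps
  have hζ0 : ∀ n, ζ n ≠ 0 := fun n => norm_pos_iff.1 (one_pos.trans (hζ n))
  have hx0 : Tendsto (fun n => (ζ n)⁻¹) atTop (𝓝 0) := by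
    simpa [tendsto_zero_iff_norm_tendsto_zero] using tendsto_inv_atTop_zero.comp hζ_atTop
  refine hQ.2.1.isPreconnected.eq_singleton_of_insert_mem_nhds hw
    (disjoint_left.2 fun q hq => hQ.notMem_basin hq) ?_
  rw [← hg_image]
  refine insert_image_mem_nhds_of_injOn_punctured one_pos hg hg_inj (fun n => inv_ne_zero (hζ0 n))
    hx0 (by simpa [g, Function.comp_def] using hΨζ) (hg_image ▸ hQ.notMem_basin hw)

lemma exists_mem_impression (hQ : Unshielded Q) (hΨ : RiemannMap Q Ψ)
    (hne : ∃ α, ∃ q ∈ Q, q ∈ impression Ψ α) {w : ℂ} (hw : w ∈ Q) :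
    ∃ α, w ∈ impression Ψ α := by
  obtain ⟨zs, hzs, hzs_w⟩ := mem_closure_iff_seq_limit.1 (hQ.subset_closure_basin hw)
  choose ζ hζ hΨζ using fun n => hΨ.2.surjOn (hzs n)
  have hΨζ_w : Tendsto (Ψ ∘ ζ) atTop (𝓝 w) := by
    simpa only [Function.comp_def, hΨζ] using hzs_w
  by_cases hbdd : ∃ M, ∃ᶠ n in atTop, ‖ζ n‖ ≤ M
  · obtain ⟨M, hM⟩ := hbdd
    obtain ⟨φ, hφ, hφM⟩ := extraction_of_frequently_atTop hM
    obtain ⟨c, -, ψ, hψ, hc⟩ := (isCompact_closedBall (0 : ℂ) M).tendsto_subseq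
      (x := ζ ∘ φ) fun n => mem_closedBall_zero_iff.2 (hφM n)
    exact hΨ.exists_mem_impression_of_tendsto (fun n => hζ _) hc
      (hΨζ_w.comp (hφ.comp hψ).tendsto_atTop) (hQ.notMem_basin hw)
  · simp only [not_exists, not_frequently, not_le] at hbdd
    have hζ_atTop : Tendsto (fun n => ‖ζ n‖) atTop atTop :=
      tendsto_atTop.2 fun M => (hbdd M).mono fun n hn => hn.le
    obtain ⟨α, q, hq, hqα⟩ := hne
    rw [hQ.eq_singleton_of_tendsto_atTop hΨ hw hζ hζ_atTop hΨζ_w] at hq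
    exact ⟨α, hq ▸ hqα⟩

end Unshielded

lemma continuous_of_isClosed_setOf_rel {X Z Y : Type*} [TopologicalSpace X] [CompactSpace X]
    [T2Space X] [TopologicalSpace Z] [CompactSpace Z] [TopologicalSpace Y] {R : X → Z → Prop}
    (hR : IsClosed {p : X × Z | R p.1 p.2}) {m : Z → Y} (hm : Continuous m) {Φ : X → Y}
    (hex : ∀ x, ∃ z, R x z) (hΦ : ∀ x z, R x z → m z = Φ x) : Continuous Φ := by
  refine continuous_iff_isClosed.2 fun F hF => ?_
  have hpre : Φ ⁻¹' F = Prod.fst '' {p : X × Z | R p.1 p.2 ∧ m p.2 ∈ F} := by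
    ext x
    constructor
    · intro hx
      obtain ⟨z, hz⟩ := hex x
      exact ⟨(x, z), ⟨hz, (hΦ x z hz).symm ▸ hx⟩, rfl⟩
    · rintro ⟨⟨x, z⟩, ⟨hz, hzF⟩, rfl⟩
      exact show Φ x ∈ F from hΦ x z hz ▸ hzF
  rw [hpre]
  exact ((hR.inter (hF.preimage (hm.comp continuous_snd))).isCompact.image
    continuous_fst).isClosed

theorem locally_connected_of_collapse_impressions_general (Q : Set ℂ) (hQ : Unshielded Q)
    (Ψ : ℂ → ℂ) (hΨ : RiemannMap Q Ψ)
    (Y : Type) [MetricSpace Y]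
    (m : ↥Q → Y) (hmc : Continuous m) (hms : Function.Surjective m)
    (hcollapse : ∀ α : AddCircle (1 : ℝ),
      ∃ y : Y, m '' {q : ↥Q | (q : ℂ) ∈ impression Ψ α} = {y}) :
    LocallyConnectedSpace Y ∧
    ∃ Φ : AddCircle (1 : ℝ) → Y,
      (∀ α : AddCircle (1 : ℝ),
        m '' {q : ↥Q | (q : ℂ) ∈ impression Ψ α} = {Φ α}) ∧
      Continuous Φ ∧ Function.Surjective Φ := by
  have : CompactSpace Q := isCompact_iff_compactSpace.1 hQ.1
  choose Φ hΦ using hcollapse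
  have hΦ_eq : ∀ α (q : Q), (q : ℂ) ∈ impression Ψ α → m q = Φ α := fun α q hq =>
    (hΦ α).subset (mem_image_of_mem m hq)
  have hΦ_ex : ∀ α, ∃ q : Q, (q : ℂ) ∈ impression Ψ α := fun α => by
    obtain ⟨q, hq, -⟩ := (hΦ α).symm.subset (mem_singleton (Φ α))
    exact ⟨q, hq⟩
  have hΦ_cont : Continuous Φ := continuous_of_isClosed_setOf_rel
    (R := fun α (q : Q) => (q : ℂ) ∈ impression Ψ α) ((isClosed_setOf_mem_impression Ψ).preimage
      (continuous_fst.prodMk (continuous_subtype_val.comp continuous_snd))) hmc hΦ_ex hΦ_eq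
  have hΦ_surj : Function.Surjective Φ := fun y => by
    obtain ⟨q, rfl⟩ := hms y
    obtain ⟨q₀, hq₀⟩ := hΦ_ex 0
    obtain ⟨α, hα⟩ := hQ.exists_mem_impression hΨ ⟨0, q₀, q₀.2, hq₀⟩ q.2
    exact ⟨α, (hΦ_eq α q hα).symm⟩
  have : LocallyConnectedSpace (AddCircle (1 : ℝ)) :=
    (QuotientAddGroup.isQuotientMap_mk _).isCoinducing.locallyConnectedSpace
  exact ⟨(hΦ_cont.isClosedMap.isQuotientMap hΦ_cont hΦ_surj).isCoinducing.locallyConnectedSpace,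
    Φ, hΦ, hΦ_cont, hΦ_surj⟩

/-- If a monotone continuous surjection `m` from an unshielded continuum `Q` onto a
compact metric space `Y` collapses every impression to a point, then `Y` is
locally connected, and the induced map `Φ_m : ℝ/ℤ → Y` (sending an angle to the
image of its impression) is a continuous surjection. -/
theorem locally_connected_of_collapse_impressions (Q : Set ℂ) (hQ : Unshielded Q)
    (Ψ : ℂ → ℂ) (hΨ : RiemannMap Q Ψ)
    (Y : Type) [MetricSpace Y] [CompactSpace Y]
    (m : ↥Q → Y) (hmc : Continuous m) (hms : Function.Surjective m)
    (hmono : ∀ y : Y, IsConnected (m ⁻¹' {y}))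
    (hcollapse : ∀ α : AddCircle (1 : ℝ),
      ∃ y : Y, m '' {q : ↥Q | (q : ℂ) ∈ impression Ψ α} = {y}) :
    LocallyConnectedSpace Y ∧
    ∃ Φ : AddCircle (1 : ℝ) → Y,
      (∀ α : AddCircle (1 : ℝ),
        m '' {q : ↥Q | (q : ℂ) ∈ impression Ψ α} = {Φ α}) ∧
      Continuous Φ ∧ Function.Surjective Φ :=
  locally_connected_of_collapse_impressions_general Q hQ Ψ hΨ Y m hmc hms hcollapse
end
end

section
/- Let Q ⊆ ℂ be an unshielded continuum with Riemann map Ψ as in the context. Suppose C₁ and C₂ are disjoint ray-compacta in Q, each of which ray-separates subsets A, B ⊆ Q. If C₃ is a ray-compactum disjoint from A ∪ B which ray-separates C₁ and C₂, then C₃ also ray-separates A and B. -/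
open Set Filter Topology Metric

noncomputable section


/-!
Suppose a component `K` of `closure U∞ ∖ C̃₃` met both `A` and `B`. Since `Cᵢ` ray-separates
`A` from `B`, `K` cannot avoid `C̃ᵢ`. If `K` meets a ray `R_θ` with `θ ∈ Θ(Cᵢ)`, then
`θ ∉ Θ(C₃)`, and the whole closure of `R_θ` avoids `C̃₃` because its principal set lies in `Cᵢ`,
which is disjoint from `C₃`. So `K` contains that closure and hence the principal set of `θ`, a
nonempty subset of `Cᵢ`. Thus `K` meets both `C₁` and `C₂`, which `C₃` forbids.

Principal sets are nonempty because `Ψ` is bounded on `1 < |z| ≤ 2`. Otherwise `Ψ` is bounded on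
`|z| > 2`: the connected set `Ψ⁻¹ {|w| > N}` cannot join the annulus to `|z| > 2` without crossing
the circle `|z| = 2`, where `Ψ` is bounded. Then `Ψ` has a removable singularity at `∞`; its value
there lies in `Q` and, by the open mapping theorem, is an isolated point of `Q`. So `Q` is a point,
and then `A` and `B` cannot both meet `K` because `C₁` separates them.
-/
open Bornology

lemma isPreconnected_setOf_lt_norm {r : ℝ} (hr : 0 < r) : IsPreconnected {z : ℂ | r < ‖z‖} := by
  have hexp : {z : ℂ | r < ‖z‖} = Complex.exp '' {w | Real.log r < w.re} := by
    ext z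
    refine ⟨fun hz => ?_, ?_⟩
    · have hz0 : z ≠ 0 := norm_pos_iff.mp (hr.trans hz)
      refine ⟨Complex.log z, ?_, Complex.exp_log hz0⟩
      rw [mem_ofPred_eq, Complex.log_re]
      exact Real.log_lt_log hr hz
    · rintro ⟨w, hw, rfl⟩
      rw [mem_ofPred_eq, Complex.norm_exp]
      exact (Real.log_lt_iff_lt_exp hr).mp hw
  rw [hexp]
  exact (convex_halfSpace_re_gt _).isPreconnected.image _ Complex.continuous_exp.continuousOn

lemma isOpen_setOf_lt_norm (r : ℝ) : IsOpen {z : ℂ | r < ‖z‖} :=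
  isOpen_lt continuous_const continuous_norm

lemma IsPreconnected.subset_singleton_of_inter_subset {X : Type*} [TopologicalSpace X] [T1Space X]
    {s U : Set X} {x : X} (hs : IsPreconnected s) (hx : x ∈ s) (hU : IsOpen U) (hxU : x ∈ U)
    (hsU : s ∩ U ⊆ {x}) : s ⊆ {x} := by
  intro y hy
  by_contra hyx
  have hcover : s ⊆ U ∪ {x}ᶜ := fun w _ => by
    by_cases hw : w = x
    · exact Or.inl (hw ▸ hxU)
    · exact Or.inr hw
  obtain ⟨w, hws, hwU, hwx⟩ :=
    hs U {x}ᶜ hU isOpen_compl_singleton hcover ⟨x, hx, hxU⟩ ⟨y, hy, hyx⟩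
  exact hwx (hsU ⟨hws, hwU⟩)

lemma inv_mem_ball_zero_inv_iff {𝕜 : Type*} [NormedDivisionRing 𝕜] {R : ℝ} (hR : 0 < R) {z : 𝕜}
    (hz : z ≠ 0) : z⁻¹ ∈ ball (0 : 𝕜) R⁻¹ ↔ R < ‖z‖ := by
  rw [mem_ball_zero_iff, norm_inv, inv_lt_inv₀ (norm_pos_iff.mpr hz) hR]

lemma exists_differentiableOn_ball_eq_comp_inv {E : Type*} [NormedAddCommGroup E]
    [NormedSpace ℂ E] [CompleteSpace E] {f : ℂ → E} {R : ℝ} (hR : 0 < R)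
    (hf : DifferentiableOn ℂ f {z | R < ‖z‖}) (hbdd : IsBounded (f '' {z | R < ‖z‖})) :
    ∃ F : ℂ → E, DifferentiableOn ℂ F (ball 0 R⁻¹) ∧ ∀ ζ ≠ 0, F ζ = f ζ⁻¹ := by
  have hinv : ∀ ζ ∈ ball (0 : ℂ) R⁻¹ \ {0}, R < ‖ζ⁻¹‖ := fun ζ ⟨hζ, hζ0⟩ =>
    (inv_mem_ball_zero_inv_iff hR (inv_ne_zero hζ0)).mp ((inv_inv ζ).symm ▸ hζ)
  refine ⟨Function.update (fun ζ => f ζ⁻¹) 0 (limUnder (𝓝[≠] 0) fun ζ => f ζ⁻¹),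
    Complex.differentiableOn_update_limUnder_of_bddAbove (ball_mem_nhds _ (inv_pos.mpr hR))
      (fun ζ hζ => ?_) ?_, fun ζ hζ => Function.update_of_ne hζ _ _⟩
  · exact ((hf.differentiableAt ((isOpen_setOf_lt_norm R).mem_nhds (hinv ζ hζ))).comp ζ
      (differentiableAt_inv hζ.2)).differentiableWithinAt
  · obtain ⟨C, hC⟩ := isBounded_iff_forall_norm_le.mp hbdd
    exact ⟨C, forall_mem_image.mpr fun ζ hζ => hC _ (mem_image_of_mem f (hinv ζ hζ))⟩

lemma norm_ofReal_mul_circlePoint (r : ℝ) (α : AddCircle (1 : ℝ)) :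
    ‖(r : ℂ) * circlePoint α‖ = |r| := by
  rw [norm_mul, circlePoint, Circle.norm_coe, mul_one, Complex.norm_real, Real.norm_eq_abs]

lemma circlePoint_injective : Function.Injective circlePoint :=
  Subtype.coe_injective.comp (AddCircle.injective_toCircle one_ne_zero)

lemma extRay_eq_image (Ψ : ℂ → ℂ) (α : AddCircle (1 : ℝ)) :
    extRay Ψ α = (fun r : ℝ => Ψ (r * circlePoint α)) '' Ioi 1 := by
  have hparam : {z : ℂ | ∃ r : ℝ, 1 < r ∧ z = r * circlePoint α}
      = (fun r : ℝ => (r : ℂ) * circlePoint α) '' Ioi 1 := by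
    ext
    simp [eq_comm]
  rw [extRay, hparam, image_image]

lemma one_lt_norm_ofReal_mul_circlePoint {r : ℝ} (hr : 1 < r) (α : AddCircle (1 : ℝ)) :
    1 < ‖(r : ℂ) * circlePoint α‖ := by
  rwa [norm_ofReal_mul_circlePoint, abs_of_pos (one_pos.trans hr)]

section RiemannMap

variable {Q : Set ℂ} {Ψ : ℂ → ℂ}

lemma RiemannMap.isOpen_image (hΨ : RiemannMap Q Ψ) {s : Set ℂ} (hs : s ⊆ {z | 1 < ‖z‖})
    (hso : IsOpen s) : IsOpen (Ψ '' s) := by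
  refine ((hΨ.1.analyticOnNhd (isOpen_setOf_lt_norm 1)).is_constant_or_isOpen
    (isPreconnected_setOf_lt_norm one_pos)).resolve_left ?_ s hs hso
  rintro ⟨w, hw⟩
  have h2 : (2 : ℂ) ∈ {z : ℂ | 1 < ‖z‖} := by norm_num
  have h3 : (3 : ℂ) ∈ {z : ℂ | 1 < ‖z‖} := by norm_num
  have := hΨ.2.injOn h2 h3 ((hw 2 h2).trans (hw 3 h3).symm)
  norm_num at this

lemma RiemannMap.isOpen_basin (hΨ : RiemannMap Q Ψ) : IsOpen (basin Q) :=
  hΨ.2.image_eq ▸ hΨ.isOpen_image subset_rfl (isOpen_setOf_lt_norm 1)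

lemma RiemannMap.tendsto_of_tendsto_comp (hΨ : RiemannMap Q Ψ) {ι : Type*} {l : Filter ι}
    {f : ι → ℂ} (hf : ∀ᶠ i in l, 1 < ‖f i‖) {z : ℂ} (hz : 1 < ‖z‖)
    (h : Tendsto (Ψ ∘ f) l (𝓝 (Ψ z))) : Tendsto f l (𝓝 z) := by
  rw [Metric.tendsto_nhds]
  intro ε hε
  have hU : IsOpen (Ψ '' ({y | 1 < ‖y‖} ∩ ball z ε)) :=
    hΨ.isOpen_image inter_subset_left ((isOpen_setOf_lt_norm 1).inter isOpen_ball)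
  filter_upwards [hf, h (hU.mem_nhds ⟨z, ⟨hz, mem_ball_self hε⟩, rfl⟩)]
    with i hi ⟨y, hy, hyi⟩
  rw [← hΨ.2.injOn hy.1 hi hyi]
  exact hy.2

lemma RiemannMap.isPreconnected_preimage (hΨ : RiemannMap Q Ψ) {T : Set ℂ} (hTb : T ⊆ basin Q)
    (hT : IsPreconnected T) : IsPreconnected ({z : ℂ | 1 < ‖z‖} ∩ Ψ ⁻¹' T) := by
  intro u v hu hv hcov ⟨x, hx, hxu⟩ ⟨y, hy, hyv⟩
  have himage : ∀ {w : Set ℂ}, IsOpen w → IsOpen (Ψ '' ({z | 1 < ‖z‖} ∩ w)) := fun hw =>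
    hΨ.isOpen_image inter_subset_left ((isOpen_setOf_lt_norm 1).inter hw)
  have hTcov : T ⊆ Ψ '' ({z | 1 < ‖z‖} ∩ u) ∪ Ψ '' ({z | 1 < ‖z‖} ∩ v) := by
    intro t ht
    obtain ⟨z, hz, rfl⟩ := hΨ.2.surjOn (hTb ht)
    exact (hcov ⟨hz, ht⟩).imp (fun h => ⟨z, ⟨hz, h⟩, rfl⟩) (fun h => ⟨z, ⟨hz, h⟩, rfl⟩)
  obtain ⟨t, htT, ⟨z₁, hz₁, rfl⟩, ⟨z₂, hz₂, h₂⟩⟩ := hT _ _ (himage hu) (himage hv) hTcov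
    ⟨Ψ x, hx.2, x, ⟨hx.1, hxu⟩, rfl⟩ ⟨Ψ y, hy.2, y, ⟨hy.1, hyv⟩, rfl⟩
  obtain rfl := hΨ.2.injOn hz₂.1 hz₁.1 h₂
  exact ⟨z₂, ⟨hz₂.1, htT⟩, hz₁.2, hz₂.2⟩

lemma RiemannMap.extRay_subset_basin (hΨ : RiemannMap Q Ψ) (α : AddCircle (1 : ℝ)) :
    extRay Ψ α ⊆ basin Q := by
  rw [extRay_eq_image]
  rintro _ ⟨r, hr, rfl⟩
  exact hΨ.2.mapsTo (one_lt_norm_ofReal_mul_circlePoint hr α)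

lemma RiemannMap.isPreconnected_extRay (hΨ : RiemannMap Q Ψ) (α : AddCircle (1 : ℝ)) :
    IsPreconnected (extRay Ψ α) := by
  rw [extRay_eq_image]
  exact isPreconnected_Ioi.image _ (hΨ.1.continuousOn.comp
    (by fun_prop : Continuous fun r : ℝ => (r : ℂ) * circlePoint α).continuousOn
    fun r hr => one_lt_norm_ofReal_mul_circlePoint hr α)

lemma RiemannMap.disjoint_extRay (hΨ : RiemannMap Q Ψ) {α β : AddCircle (1 : ℝ)} (h : α ≠ β) :
    Disjoint (extRay Ψ α) (extRay Ψ β) := by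
  rw [extRay_eq_image, extRay_eq_image, disjoint_left]
  rintro _ ⟨r, hr : 1 < r, rfl⟩ ⟨s, hs : 1 < s, hsr⟩
  have heq := hΨ.2.injOn (one_lt_norm_ofReal_mul_circlePoint hs β)
    (one_lt_norm_ofReal_mul_circlePoint hr α) hsr
  have hrs : s = r := by
    have := congrArg norm heq
    rwa [norm_ofReal_mul_circlePoint, norm_ofReal_mul_circlePoint,
      abs_of_pos (one_pos.trans hr), abs_of_pos (one_pos.trans hs)] at this
  subst hrs
  exact h (circlePoint_injective (mul_left_cancel₀ (by exact_mod_cast (one_pos.trans hs).ne')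
    heq).symm)

lemma setOf_lt_norm_subset_basin {M : ℝ} (hM : 0 < M) (hQM : Q ⊆ closedBall 0 M) :
    {z : ℂ | M < ‖z‖} ⊆ basin Q := by
  have hsub : {z : ℂ | M < ‖z‖} ⊆ Qᶜ := fun z hz hzQ =>
    (mem_closedBall_zero_iff.mp (hQM hzQ)).not_gt hz
  intro w hw
  refine ⟨hsub hw, fun hb => ?_⟩
  obtain ⟨R, hR⟩ := isBounded_iff_forall_norm_le.mp
    (hb.subset ((isPreconnected_setOf_lt_norm hM).subset_connectedComponentIn hw hsub))
  have hfar : M < ‖((max R M + 1 : ℝ) : ℂ)‖ := by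
    rw [Complex.norm_real, Real.norm_of_nonneg (by positivity)]
    linarith [le_max_right R M]
  linarith [hR _ hfar, le_max_left R M, Complex.norm_real (max R M + 1),
    Real.norm_of_nonneg (show 0 ≤ max R M + 1 by positivity)]

end RiemannMap

section Dichotomy

variable {Q : Set ℂ} {Ψ : ℂ → ℂ}

lemma RiemannMap.isBounded_annulus_or_isBounded_exterior (hQ : IsCompact Q)
    (hΨ : RiemannMap Q Ψ) {R : ℝ} (hR : 1 < R) :
    IsBounded (Ψ '' {z | 1 < ‖z‖ ∧ ‖z‖ ≤ R}) ∨ IsBounded (Ψ '' {z | R < ‖z‖}) := by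
  refine or_iff_not_imp_right.mpr fun hunb => ?_
  obtain ⟨r, hr⟩ := hQ.isBounded.subset_closedBall 0
  have hsphere : sphere (0 : ℂ) R ⊆ {z | 1 < ‖z‖} := fun z hz =>
    show 1 < ‖z‖ from (mem_sphere_zero_iff_norm.mp hz).symm ▸ hR
  obtain ⟨B, hB⟩ := isBounded_iff_forall_norm_le.mp
    ((isCompact_sphere (0 : ℂ) R).image_of_continuousOn (hΨ.1.continuousOn.mono hsphere)).isBounded
  set N := max B (max r 1)
  have hN : {w : ℂ | N < ‖w‖} ⊆ basin Q := fun w hw =>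
    setOf_lt_norm_subset_basin (one_pos.trans_le (le_max_right r 1))
      (hr.trans (closedBall_subset_closedBall (le_max_left r 1)))
      (show max r 1 < ‖w‖ from (le_max_right _ _).trans_lt hw)
  refine isBounded_iff_forall_norm_le.mpr ⟨N, ?_⟩
  rintro _ ⟨z, ⟨hz1, hzR⟩, rfl⟩
  by_contra! hzN
  obtain ⟨ζ, hζR, hζN⟩ : ∃ ζ : ℂ, R < ‖ζ‖ ∧ N < ‖Ψ ζ‖ := by
    simp only [isBounded_iff_forall_norm_le, forall_mem_image, mem_ofPred_eq, not_exists,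
      not_forall, not_le, exists_prop] at hunb
    exact hunb N
  -- the connected set `Ψ⁻¹ {N < ‖w‖}` contains `z` and `ζ`, so it meets the circle of radius `R`
  obtain ⟨x, hx, hxR⟩ := (hΨ.isPreconnected_preimage hN (isPreconnected_setOf_lt_norm
    (one_pos.trans_le ((le_max_right r 1).trans (le_max_right _ _))))).intermediate_value
    ⟨hz1, hzN⟩ ⟨hR.trans hζR, hζN⟩ continuous_norm.continuousOn ⟨hzR, hζR.le⟩
  have hxB := hB (Ψ x) ⟨x, mem_sphere_zero_iff_norm.mpr hxR, rfl⟩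
  have hxN : N < ‖Ψ x‖ := hx.2
  linarith [le_max_left B (max r 1)]

lemma RiemannMap.mem_of_tendsto_cobounded (hQ : Unshielded Q) (hΨ : RiemannMap Q Ψ) {w : ℂ}
    (h : Tendsto Ψ (cobounded ℂ) (𝓝 w)) : w ∈ Q := by
  have hev : ∀ᶠ z in cobounded ℂ, 1 < ‖z‖ := tendsto_norm_cobounded_atTop.eventually_gt_atTop 1
  rw [hQ.2.2, frontier, hΨ.isOpen_basin.interior_eq]
  refine ⟨mem_closure_of_tendsto h (hev.mono fun z hz => hΨ.2.mapsTo hz), fun hw => ?_⟩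
  obtain ⟨z, hz, rfl⟩ := hΨ.2.surjOn hw
  exact tendsto_id.not_tendsto (disjoint_cobounded_nhds z) (hΨ.tendsto_of_tendsto_comp hev hz h)

lemma RiemannMap.subsingleton_of_isBounded_exterior (hQ : Unshielded Q) (hΨ : RiemannMap Q Ψ)
    {R : ℝ} (hR : 1 ≤ R) (hbdd : IsBounded (Ψ '' {z | R < ‖z‖})) : Q.Subsingleton := by
  have hR0 : 0 < R := one_pos.trans_le hR
  have hext : {z : ℂ | R < ‖z‖} ⊆ {z | 1 < ‖z‖} := fun z hz => hR.trans_lt hz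
  obtain ⟨F, hFd, hFΨ⟩ := exists_differentiableOn_ball_eq_comp_inv hR0 (hΨ.1.mono hext) hbdd
  have hΨF : ∀ z ≠ 0, Ψ z = F z⁻¹ := fun z hz => by rw [hFΨ _ (inv_ne_zero hz), inv_inv]
  have hlim : Tendsto Ψ (cobounded ℂ) (𝓝 (F 0)) := by
    refine (((hFd.differentiableAt (ball_mem_nhds _ (inv_pos.mpr hR0))).continuousAt.tendsto).comp
      tendsto_inv₀_cobounded).congr' ?_
    filter_upwards [tendsto_norm_cobounded_atTop.eventually_gt_atTop 0] with z hz
    exact (hΨF z (norm_pos_iff.mp hz)).symm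
  have hopen : IsOpen (F '' ball 0 R⁻¹) := by
    refine ((hFd.analyticOnNhd isOpen_ball).is_constant_or_isOpen
      (convex_ball _ _).isPreconnected).resolve_left ?_ _ subset_rfl isOpen_ball
    rintro ⟨w, hw⟩
    have hpoint : ∀ t : ℝ, R < t → Ψ t = w ∧ 1 < ‖(t : ℂ)‖ := fun t ht => by
      have ht' : R < ‖(t : ℂ)‖ := by rwa [Complex.norm_real, Real.norm_of_nonneg (by linarith)]
      have ht0 : (t : ℂ) ≠ 0 := norm_pos_iff.mp (hR0.trans ht')
      exact ⟨(hΨF _ ht0).trans (hw _ ((inv_mem_ball_zero_inv_iff hR0 ht0).mpr ht')), hext ht'⟩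
    obtain ⟨h₁, h₁'⟩ := hpoint (R + 1) (by linarith)
    obtain ⟨h₂, h₂'⟩ := hpoint (R + 2) (by linarith)
    have := hΨ.2.injOn h₁' h₂' (h₁.trans h₂.symm)
    norm_num at this
  refine subsingleton_singleton.anti (hQ.2.1.isPreconnected.subset_singleton_of_inter_subset
    (hΨ.mem_of_tendsto_cobounded hQ hlim) hopen ⟨0, mem_ball_self (inv_pos.mpr hR0), rfl⟩ ?_)
  rintro _ ⟨hqQ, ζ, hζ, rfl⟩
  by_cases hζ0 : ζ = 0
  · rw [hζ0, mem_singleton_iff]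
  · refine absurd hqQ (hFΨ ζ hζ0 ▸ (hΨ.2.mapsTo (hext ?_)).1)
    show R < ‖ζ⁻¹‖
    rwa [← inv_mem_ball_zero_inv_iff hR0 (inv_ne_zero hζ0), inv_inv]

lemma RiemannMap.isBounded_annulus_or_subsingleton (hQ : Unshielded Q) (hΨ : RiemannMap Q Ψ) :
    IsBounded (Ψ '' {z | 1 < ‖z‖ ∧ ‖z‖ ≤ 2}) ∨ Q.Subsingleton :=
  (hΨ.isBounded_annulus_or_isBounded_exterior hQ.1 one_lt_two).imp_right
    (hΨ.subsingleton_of_isBounded_exterior hQ one_le_two)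

lemma RiemannMap.principalSet_nonempty (hΨ : RiemannMap Q Ψ)
    (hbdd : IsBounded (Ψ '' {z | 1 < ‖z‖ ∧ ‖z‖ ≤ 2})) (θ : AddCircle (1 : ℝ)) :
    (principalSet Ψ θ).Nonempty := by
  set r : ℕ → ℝ := fun n => 1 + 1 / (n + 1)
  have hr : ∀ n, 1 < r n ∧ r n ≤ 2 := fun n => by
    have h₀ : (0 : ℝ) < 1 / (n + 1) := by positivity
    have h₁ : 1 / ((n : ℝ) + 1) ≤ 1 := by
      rw [div_le_one (by positivity)]
      linarith [(Nat.cast_nonneg n : (0 : ℝ) ≤ n)]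
    exact ⟨by linarith, by linarith⟩
  have hrlim : Tendsto r atTop (𝓝 1) := by
    simpa [r] using (tendsto_const_nhds (x := (1 : ℝ))).add
      (tendsto_one_div_add_atTop_nhds_zero_nat (𝕜 := ℝ))
  set z : ℕ → ℂ := fun n => (r n : ℂ) * circlePoint θ
  have hz : ∀ n, 1 < ‖z n‖ := fun n => one_lt_norm_ofReal_mul_circlePoint (hr n).1 θ
  have hzmem : ∀ n, Ψ (z n) ∈ Ψ '' {z | 1 < ‖z‖ ∧ ‖z‖ ≤ 2} := fun n => by
    refine mem_image_of_mem _ ⟨hz n, ?_⟩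
    rw [norm_ofReal_mul_circlePoint, abs_of_pos (one_pos.trans (hr n).1)]
    exact (hr n).2
  obtain ⟨w, -, φ, hφ, hw⟩ := tendsto_subseq_of_bounded hbdd hzmem
  have hray : ∀ n, Ψ (z n) ∈ extRay Ψ θ := fun n => by
    rw [extRay_eq_image]
    exact ⟨r n, (hr n).1, rfl⟩
  refine ⟨w, mem_closure_of_tendsto hw (Eventually.of_forall fun n => hray (φ n)), ?_⟩
  rw [extRay_eq_image]
  rintro ⟨s, hs : 1 < s, rfl⟩
  -- `z ∘ φ` would converge both to `circlePoint θ` and to `s * circlePoint θ`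
  have hzlim : Tendsto z atTop (𝓝 (circlePoint θ)) := by
    simpa using ((Complex.continuous_ofReal.tendsto 1).comp hrlim).mul_const (circlePoint θ)
  have heq := tendsto_nhds_unique
    (hΨ.tendsto_of_tendsto_comp (Eventually.of_forall fun n => hz (φ n))
      (one_lt_norm_ofReal_mul_circlePoint hs θ) hw)
    (hzlim.comp hφ.tendsto_atTop)
  have hnorm := congrArg norm heq
  rw [norm_ofReal_mul_circlePoint, abs_of_pos (one_pos.trans hs), circlePoint, Circle.norm_coe]
    at hnorm
  linarith

end Dichotomy

section RaySeparation

variable {Q : Set ℂ} {Ψ : ℂ → ℂ}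

lemma RayCompactum.mem_closure_basin_diff_tilde (hQ : Unshielded Q) (hΨ : RiemannMap Q Ψ)
    (C : RayCompactum Q Ψ) {q : ℂ} (hq : q ∈ Q) (hqC : q ∉ C.carrier) :
    q ∈ closure (basin Q) \ C.tilde := by
  refine ⟨(hQ.2.2 ▸ frontier_subset_closure) hq, ?_⟩
  rintro (h | h)
  · exact hqC h
  · obtain ⟨θ, -, hθ⟩ := mem_iUnion₂.mp h
    exact (hΨ.extRay_subset_basin θ hθ).1 hq

lemma RaySeparates.disjoint_carrier {C : RayCompactum Q Ψ} {A B : Set ℂ}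
    (h : RaySeparates C A B) : Disjoint C.carrier (A ∪ B) :=
  disjoint_iff_inter_eq_empty.mpr h.1

lemma RaySeparates.disjoint (hQ : Unshielded Q) (hΨ : RiemannMap Q Ψ) {C : RayCompactum Q Ψ}
    {A B : Set ℂ} (hA : A ⊆ Q) (h : RaySeparates C A B) : Disjoint A B := by
  refine disjoint_left.mpr fun q hqA hqB => ?_
  have hq := C.mem_closure_basin_diff_tilde hQ hΨ (hA hqA)
    (disjoint_right.mp h.disjoint_carrier (Or.inl hqA))
  exact h.2 q hq ⟨⟨q, mem_connectedComponentIn hq, hqA⟩, ⟨q, mem_connectedComponentIn hq, hqB⟩⟩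

lemma RaySeparates.inter_tilde_nonempty {C : RayCompactum Q Ψ} {A B : Set ℂ}
    (h : RaySeparates C A B) {K : Set ℂ} (hK : IsPreconnected K) (hKQ : K ⊆ closure (basin Q))
    (hKA : (K ∩ A).Nonempty) (hKB : (K ∩ B).Nonempty) : (K ∩ C.tilde).Nonempty := by
  by_contra hKC
  obtain ⟨a, haK, haA⟩ := hKA
  have hsub : K ⊆ closure (basin Q) \ C.tilde := fun x hx => ⟨hKQ hx, fun hxC => hKC ⟨x, hx, hxC⟩⟩
  have hKa := hK.subset_connectedComponentIn haK hsub
  exact h.2 a (hsub haK) ⟨⟨a, hKa haK, haA⟩, hKB.mono (inter_subset_inter_left _ hKa)⟩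

lemma RayCompactum.closure_extRay_subset (hQ : Unshielded Q) (hΨ : RiemannMap Q Ψ)
    {C D : RayCompactum Q Ψ} (hDC : Disjoint D.carrier C.carrier) {θ : AddCircle (1 : ℝ)}
    (hθC : θ ∈ C.angles) (hθD : θ ∉ D.angles) :
    closure (extRay Ψ θ) ⊆ closure (basin Q) \ D.tilde := by
  intro x hx
  by_cases hxθ : x ∈ extRay Ψ θ
  · have hxb := hΨ.extRay_subset_basin θ hxθ
    refine ⟨subset_closure hxb, ?_⟩
    rintro (hxD | hxD)
    · exact hxb.1 (D.carrier_subset hxD)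
    · obtain ⟨φ, hφ, hxφ⟩ := mem_iUnion₂.mp hxD
      exact disjoint_left.mp (hΨ.disjoint_extRay (ne_of_mem_of_not_mem hφ hθD).symm) hxθ hxφ
  · have hxC := C.principal_subset θ hθC ⟨hx, hxθ⟩
    exact D.mem_closure_basin_diff_tilde hQ hΨ (C.carrier_subset hxC)
      (disjoint_right.mp hDC hxC)

lemma RaySeparates.connectedComponentIn_inter_carrier_nonempty (hQ : Unshielded Q)
    (hΨ : RiemannMap Q Ψ) (hprinc : ∀ θ, (principalSet Ψ θ).Nonempty) {C D : RayCompactum Q Ψ}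
    {A B : Set ℂ} (h : RaySeparates C A B) (hDC : Disjoint D.carrier C.carrier) (z : ℂ)
    (hA : (connectedComponentIn (closure (basin Q) \ D.tilde) z ∩ A).Nonempty)
    (hB : (connectedComponentIn (closure (basin Q) \ D.tilde) z ∩ B).Nonempty) :
    (connectedComponentIn (closure (basin Q) \ D.tilde) z ∩ C.carrier).Nonempty := by
  have hKS : connectedComponentIn (closure (basin Q) \ D.tilde) z ⊆ closure (basin Q) \ D.tilde :=
    connectedComponentIn_subset _ _
  obtain ⟨p, hpK, hpC | hpR⟩ :=
    h.inter_tilde_nonempty isPreconnected_connectedComponentIn (hKS.trans sdiff_subset) hA hB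
  · exact ⟨p, hpK, hpC⟩
  obtain ⟨θ, hθC, hpθ⟩ := mem_iUnion₂.mp hpR
  have hθD : θ ∉ D.angles := fun hθD => (hKS hpK).2 (Or.inr (mem_iUnion₂.mpr ⟨θ, hθD, hpθ⟩))
  have hrayK : closure (extRay Ψ θ) ⊆ connectedComponentIn (closure (basin Q) \ D.tilde) z := by
    rw [connectedComponentIn_eq hpK]
    exact (hΨ.isPreconnected_extRay θ).closure.subset_connectedComponentIn (subset_closure hpθ)
      (RayCompactum.closure_extRay_subset hQ hΨ hDC hθC hθD)
  obtain ⟨w, hw⟩ := hprinc θ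
  exact ⟨w, hrayK hw.1, C.principal_subset θ hθC hw⟩

end RaySeparation

theorem middle_raySeparates_general (Q : Set ℂ) (hQ : Unshielded Q)
    (Ψ : ℂ → ℂ) (hΨ : RiemannMap Q Ψ)
    (A B : Set ℂ) (hA : A ⊆ Q) (hB : B ⊆ Q)
    (C₁ C₂ C₃ : RayCompactum Q Ψ)
    (h₁ : RaySeparates C₁ A B) (h₂ : RaySeparates C₂ A B)
    (h₃disj : Disjoint C₃.carrier (A ∪ B))
    (h₃ : RaySeparates C₃ C₁.carrier C₂.carrier) :
    RaySeparates C₃ A B := by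
  refine ⟨disjoint_iff_inter_eq_empty.mp h₃disj, fun z hz ⟨hzA, hzB⟩ => ?_⟩
  rcases hΨ.isBounded_annulus_or_subsingleton hQ with hbdd | hQsub
  · have hprinc := hΨ.principalSet_nonempty hbdd
    exact h₃.2 z hz
      ⟨h₁.connectedComponentIn_inter_carrier_nonempty hQ hΨ hprinc
          (h₃.disjoint_carrier.mono_right subset_union_left) z hzA hzB,
        h₂.connectedComponentIn_inter_carrier_nonempty hQ hΨ hprinc
          (h₃.disjoint_carrier.mono_right subset_union_right) z hzA hzB⟩
  · obtain ⟨a, -, ha⟩ := hzA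
    obtain ⟨b, -, hb⟩ := hzB
    exact disjoint_left.mp (h₁.disjoint hQ hΨ hA) ha (hQsub (hB hb) (hA ha) ▸ hb)

/-- If disjoint ray-compacta `C₁, C₂` each ray-separate `A` and `B`, and a
ray-compactum `C₃` disjoint from `A ∪ B` ray-separates `C₁` and `C₂`, then `C₃`
also ray-separates `A` and `B`. -/
theorem middle_raySeparates (Q : Set ℂ) (hQ : Unshielded Q)
    (Ψ : ℂ → ℂ) (hΨ : RiemannMap Q Ψ)
    (A B : Set ℂ) (hA : A ⊆ Q) (hB : B ⊆ Q)
    (C₁ C₂ C₃ : RayCompactum Q Ψ)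
    (hdisj : Disjoint C₁.carrier C₂.carrier)
    (h₁ : RaySeparates C₁ A B) (h₂ : RaySeparates C₂ A B)
    (h₃disj : Disjoint C₃.carrier (A ∪ B))
    (h₃ : RaySeparates C₃ C₁.carrier C₂.carrier) :
    RaySeparates C₃ A B :=
  middle_raySeparates_general Q hQ Ψ hΨ A B hA hB C₁ C₂ C₃ h₁ h₂ h₃disj h₃

end
end
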